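/- Fix integers m ≥ 2, n ≥ 1, k = ⌊n/2⌋ + 1. Define V_0 = {α ∈ (ℤ/m)^n : n_i(α) ≤ k ∀ 1 ≤ i ≤ m-1} and V_j = {α : n_j(α) ≥ k-1} for 1 ≤ j ≤ m-1. Then the graph on (ℤ/m)^n whose edge set is the union of the cliques on V_0, ..., V_{m-1} is chordal. -/

import Mathlib

/-!
Every vertex lying in two of the sets `V_j` lies in `V_0`: if at least `k - 1` of its
coordinates equal `j` and at least `k - 1` equal `j' ≠ j`, then any value occurs at most
`n - (k - 1) ≤ k` times.
A union of cliques whose pairwise intersections all lie in one clique `V_0` is chordal. Label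
each edge of a cycle by a clique containing it. If two consecutive edges share a label, their
outer endpoints are joined by a chord. Otherwise the second and the fourth vertex of the cycle
each lie in two cliques, hence both lie in `V_0`, and they are joined by a chord.
-/

open Finset SimpleGraph

/-- A graph is chordal if every cycle of length at least 4 has a chord, i.e.
an edge of the graph joining two vertices of the cycle which is not an edge of
the cycle (equivalently, joining two nonconsecutive vertices of the cycle). -/
def IsChordal {V : Type*} (G : SimpleGraph V) : Prop :=
  ∀ ⦃v : V⦄ (w : G.Walk v v), w.IsCycle → 4 ≤ w.length →
    ∃ a b, a ∈ w.support ∧ b ∈ w.support ∧ G.Adj a b ∧ s(a, b) ∉ w.edges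

namespace SimpleGraph.Walk

variable {V : Type*} {G : SimpleGraph V} {u : V}

lemma IsCycle.getVert_eq_getVert_iff {c : G.Walk u u} (hc : c.IsCycle) {i j : ℕ}
    (hi : i ≤ c.length) (hj : j ≤ c.length) :
    c.getVert i = c.getVert j ↔
      i = j ∨ (i = 0 ∧ j = c.length) ∨ (i = c.length ∧ j = 0) := by
  constructor
  · intro h
    rcases Nat.eq_zero_or_pos i with rfl | hi0
    · rw [getVert_zero, eq_comm, hc.getVert_endpoint_iff hj] at h
      omega
    rcases Nat.eq_zero_or_pos j with rfl | hj0
    · rw [getVert_zero, hc.getVert_endpoint_iff hi] at h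
      omega
    exact .inl (hc.getVert_injOn ⟨hi0, hi⟩ ⟨hj0, hj⟩ h)
  · rintro (rfl | ⟨rfl, rfl⟩ | ⟨rfl, rfl⟩) <;> simp

lemma IsCycle.getVert_ne_getVert_add_two {c : G.Walk u u} (hc : c.IsCycle) {i : ℕ}
    (hi : i + 2 ≤ c.length) : c.getVert i ≠ c.getVert (i + 2) := by
  rw [ne_eq, hc.getVert_eq_getVert_iff (by omega) hi]
  have := hc.three_le_length
  omega

lemma IsCycle.mk_getVert_add_two_notMem_edges {c : G.Walk u u} (hc : c.IsCycle)
    (h4 : 4 ≤ c.length) {i : ℕ} (hi : i + 2 ≤ c.length) :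
    s(c.getVert i, c.getVert (i + 2)) ∉ c.edges := by
  rw [mk_mem_edges_iff_exists]
  rintro ⟨t, ht, hedge⟩
  have eq_iff := fun {p q : ℕ} (hp : p ≤ c.length) (hq : q ≤ c.length) =>
    hc.getVert_eq_getVert_iff hp hq
  rcases Sym2.eq_iff.mp hedge with ⟨h₁, h₂⟩ | ⟨h₁, h₂⟩ <;>
    rw [eq_iff (by omega) (by omega)] at h₁ h₂ <;> omega

end SimpleGraph.Walk

theorem isChordal_of_adj_getVert_add_two {V : Type*} {G : SimpleGraph V}
    (h : ∀ ⦃v : V⦄ (c : G.Walk v v), c.IsCycle → 4 ≤ c.length →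
      ∃ i, i + 2 ≤ c.length ∧ G.Adj (c.getVert i) (c.getVert (i + 2))) :
    IsChordal G := by
  intro v c hc h4
  obtain ⟨i, hi, hadj⟩ := h c hc h4
  exact ⟨_, _, c.getVert_mem_support i, c.getVert_mem_support (i + 2), hadj,
    hc.mk_getVert_add_two_notMem_edges h4 hi⟩

def cliqueUnion {ι V : Type*} (S : ι → Set V) : SimpleGraph V :=
  SimpleGraph.fromRel fun a b => ∃ j, a ∈ S j ∧ b ∈ S j

section cliqueUnion

variable {ι V : Type*} (S : ι → Set V)

lemma cliqueUnion_adj {a b : V} :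
    (cliqueUnion S).Adj a b ↔ a ≠ b ∧ ∃ j, a ∈ S j ∧ b ∈ S j := by
  simp only [cliqueUnion, fromRel_adj, and_comm (a := a ∈ _), or_self]

theorem cliqueUnion_isChordal (j₀ : ι) (hS : ∀ j j', j ≠ j' → S j ∩ S j' ⊆ S j₀) :
    IsChordal (cliqueUnion S) := by
  refine isChordal_of_adj_getVert_add_two fun v c hc h4 => ?_
  have label : ∀ t < c.length, ∃ j, c.getVert t ∈ S j ∧ c.getVert (t + 1) ∈ S j :=
    fun t ht => ((cliqueUnion_adj S).mp (c.adj_getVert_succ ht)).2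
  suffices ∃ i, i + 2 ≤ c.length ∧ ∃ j, c.getVert i ∈ S j ∧ c.getVert (i + 2) ∈ S j by
    obtain ⟨i, hi, hshared⟩ := this
    exact ⟨i, hi, (cliqueUnion_adj S).mpr ⟨hc.getVert_ne_getVert_add_two hi, hshared⟩⟩
  obtain ⟨j₁, h₀₁, h₁₁⟩ := label 0 (by omega)
  obtain ⟨j₂, h₁₂, h₂₂⟩ := label 1 (by omega)
  obtain ⟨j₃, h₂₃, h₃₃⟩ := label 2 (by omega)
  obtain ⟨j₄, h₃₄, h₄₄⟩ := label 3 (by omega)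
  by_cases e₁₂ : j₁ = j₂
  · exact ⟨0, by omega, j₁, h₀₁, e₁₂ ▸ h₂₂⟩
  by_cases e₂₃ : j₂ = j₃
  · exact ⟨1, by omega, j₂, h₁₂, e₂₃ ▸ h₃₃⟩
  by_cases e₃₄ : j₃ = j₄
  · exact ⟨2, by omega, j₃, h₂₃, e₃₄ ▸ h₄₄⟩
  exact ⟨1, by omega, j₀, hS _ _ e₁₂ ⟨h₁₁, h₁₂⟩, hS _ _ e₃₄ ⟨h₃₃, h₃₄⟩⟩

end cliqueUnion

section vertexClass

variable {ι α : Type*} [Fintype ι] [DecidableEq α]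

lemma sum_card_fiber_le_card (a : ι → α) (t : Finset α) :
    ∑ j ∈ t, #{l | a l = j} ≤ Fintype.card ι :=
  (sum_card_fiberwise_eq_card_filter univ t a).trans_le (card_le_univ _)

variable [Zero α]

/-- `vertexClass k j` is the paper's `V_j`. -/
def vertexClass (k : ℕ) (j : α) : Set (ι → α) :=
  if j = 0 then {a | ∀ i, i ≠ 0 → #{l | a l = i} ≤ k} else {a | k - 1 ≤ #{l | a l = j}}

lemma vertexClass_inter_subset_zero {k : ℕ} (hk : Fintype.card ι < 2 * k) {j j' : α}
    (hjj' : j ≠ j') : vertexClass (ι := ι) k j ∩ vertexClass k j' ⊆ vertexClass k 0 := by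
  rintro a ⟨ha, ha'⟩
  by_cases hj : j = 0
  · rwa [hj] at ha
  by_cases hj' : j' = 0
  · rwa [hj'] at ha'
  simp only [vertexClass, hj, hj', if_true, if_false, Set.mem_ofPred_eq] at ha ha' ⊢
  intro i hi
  by_cases hij : i = j ∨ i = j'
  · have := sum_card_fiber_le_card a {j, j'}
    rw [sum_pair hjj'] at this
    rcases hij with rfl | rfl <;> omega
  have := sum_card_fiber_le_card a {i, j, j'}
  rw [sum_insert (by simpa using hij), sum_pair hjj'] at this
  omega

lemma exists_mem_vertexClass_iff {k : ℕ} {a b : ι → α} :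
    (∃ j, a ∈ vertexClass k j ∧ b ∈ vertexClass k j) ↔
      (∀ i, i ≠ 0 → #{l | a l = i} ≤ k ∧ #{l | b l = i} ≤ k) ∨
        ∃ j, j ≠ 0 ∧ k - 1 ≤ #{l | a l = j} ∧ k - 1 ≤ #{l | b l = j} := by
  constructor
  · rintro ⟨j, ha, hb⟩
    by_cases hj : j = 0
    · simp only [vertexClass, hj, if_true, Set.mem_ofPred_eq] at ha hb
      exact .inl fun i hi => ⟨ha i hi, hb i hi⟩
    · simp only [vertexClass, hj, if_false, Set.mem_ofPred_eq] at ha hb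
      exact .inr ⟨j, hj, ha, hb⟩
  · rintro (h | ⟨j, hj, ha, hb⟩)
    · exact ⟨0, by simpa [vertexClass] using fun i hi => (h i hi).1,
        by simpa [vertexClass] using fun i hi => (h i hi).2⟩
    · exact ⟨j, by simpa [vertexClass, hj] using ha, by simpa [vertexClass, hj] using hb⟩

end vertexClass

theorem clique_union_graph_chordal_general (m n k : ℕ) (hk : k = n / 2 + 1) :
    IsChordal (SimpleGraph.fromRel fun a b : Fin n → ZMod m =>
      ((∀ i : ZMod m, i ≠ 0 →
          (Finset.univ.filter fun l => a l = i).card ≤ k ∧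
          (Finset.univ.filter fun l => b l = i).card ≤ k) ∨
        ∃ j : ZMod m, j ≠ 0 ∧
          k - 1 ≤ (Finset.univ.filter fun l => a l = j).card ∧
          k - 1 ≤ (Finset.univ.filter fun l => b l = j).card)) := by
  have hV : ∀ j j' : ZMod m, j ≠ j' →
      vertexClass k j ∩ vertexClass k j' ⊆ vertexClass (ι := Fin n) k 0 :=
    fun _ _ => vertexClass_inter_subset_zero (by rw [Fintype.card_fin]; omega)
  convert cliqueUnion_isChordal _ 0 hV using 1
  ext a b
  simp only [fromRel_adj, ← exists_mem_vertexClass_iff, cliqueUnion_adj, and_comm (a := b ∈ _),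
    or_self]

theorem clique_union_graph_chordal (m n k : ℕ) (hm : 2 ≤ m) (hn : 1 ≤ n)
    (hk : k = n / 2 + 1) :
    IsChordal (SimpleGraph.fromRel fun a b : Fin n → ZMod m =>
      ((∀ i : ZMod m, i ≠ 0 →
          (Finset.univ.filter fun l => a l = i).card ≤ k ∧
          (Finset.univ.filter fun l => b l = i).card ≤ k) ∨
        ∃ j : ZMod m, j ≠ 0 ∧
          k - 1 ≤ (Finset.univ.filter fun l => a l = j).card ∧
          k - 1 ≤ (Finset.univ.filter fun l => b l = j).card)) :=
  clique_union_graph_chordal_general m n k hk
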